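/- Let r ≥ 2 and let F be an r-graph with |V(F)| > r. There exists a constant α < 1, depending only on r and |V(F)|, such that for every Berge-F-free hypergraph H and every hyperedge h of H with |h| ≥ |V(F)|, at least (1−α)·binom(|h|, r) of the r-element subsets of h are contained in at most |E(F)|−1 hyperedges of H. -/

import Mathlib

open Finset

/-- `H` contains (a subhypergraph which is) a Berge copy of `F`. -/
def ContainsBerge {α β : Type*} [DecidableEq α] [DecidableEq β]
    (F : Finset (Finset α)) (H : Finset (Finset β)) : Prop :=
  ∃ (φ : α → β) (f : Finset α → Finset β),
    Function.Injective φ ∧ Set.InjOn f (F : Set (Finset α)) ∧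
    (∀ e ∈ F, f e ∈ H) ∧ (∀ e ∈ F, e.image φ ⊆ f e)

/-- `G` contains a subhypergraph isomorphic to `F`. -/
def CopyIn {α β : Type*} [DecidableEq α] [DecidableEq β]
    (F : Finset (Finset α)) (G : Finset (Finset β)) : Prop :=
  ∃ φ : α → β, Function.Injective φ ∧ ∀ e ∈ F, e.image φ ∈ G

noncomputable def exBerge {α : Type*} [DecidableEq α] (r n : ℕ) (F : Finset (Finset α)) : ℕ :=
  sSup {m | ∃ H : Finset (Finset (Fin n)),
    (∀ e ∈ H, e.card = r) ∧ ¬ ContainsBerge F H ∧ H.card = m}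

noncomputable def exForb {α : Type*} [DecidableEq α] (r n : ℕ) (F : Finset (Finset α)) : ℕ :=
  sSup {m | ∃ H : Finset (Finset (Fin n)),
    (∀ e ∈ H, e.card = r) ∧ ¬ CopyIn F H ∧ H.card = m}

/-- number of `r`-sets of vertices all of whose `k`-subsets are edges of `G`,
i.e. the number of copies of the complete `k`-graph on `r` vertices in `G`. -/
def cliqueCount (k r : ℕ) {n : ℕ} (G : Finset (Finset (Fin n))) : ℕ :=
  (((Finset.univ : Finset (Fin n)).powersetCard r).filter
    (fun S => ∀ e ∈ S.powersetCard k, e ∈ G)).card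

noncomputable def exGenClique {α : Type*} [DecidableEq α] (k r n : ℕ)
    (F : Finset (Finset α)) : ℕ :=
  sSup {m | ∃ G : Finset (Finset (Fin n)),
    (∀ e ∈ G, e.card = k) ∧ ¬ CopyIn F G ∧ cliqueCount k r G = m}

/-- `k ≥ R^(r)(F,F)`: every 2-coloring of the `r`-subsets of a `k`-set has a
monochromatic copy of `F`. -/
def RamseyProp {α : Type*} [DecidableEq α] (k r : ℕ) (F : Finset (Finset α)) : Prop :=
  ∀ χ : Finset (Fin k) → Bool, ∃ c : Bool,
    CopyIn F (((Finset.univ : Finset (Fin k)).powersetCard r).filter (fun e => χ e = c))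

def rShadow {β : Type*} [DecidableEq β] (r : ℕ) (H : Finset (Finset β)) : Finset (Finset β) :=
  H.biUnion (fun h => h.powersetCard r)

/-- the `k`-uniform expansion of a graph: add `k-2` new distinct vertices to each edge. -/
def expansion {α : Type*} [DecidableEq α] (k : ℕ) (F0 : Finset (Finset α)) :
    Finset (Finset (α ⊕ Finset α × Fin (k - 2))) :=
  F0.image (fun e =>
    e.image Sum.inl ∪ (Finset.univ : Finset (Fin (k - 2))).image (fun i => Sum.inr (e, i)))

/-- Turán hypergraph `T^r(n,q)`: partition `Fin n` into `q` parts (residues mod `q`),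
edges are the `r`-sets meeting every part at most once. -/
def turanEdges (r n q : ℕ) : Finset (Finset (Fin n)) :=
  ((Finset.univ : Finset (Fin n)).powersetCard r).filter
    (fun S => ∀ u ∈ S, ∀ v ∈ S, (u : ℕ) % q = (v : ℕ) % q → u = v)

def Colorable2 {α : Type*} (F0 : Finset (Finset α)) (t : ℕ) : Prop :=
  ∃ c : α → Fin t, ∀ e ∈ F0, ∀ u ∈ e, ∀ v ∈ e, u ≠ v → c u ≠ c v

/-- number of subhypergraphs of `G` isomorphic to `F`. -/
def copyCount {α β : Type*} [Fintype α] [DecidableEq α] [Fintype β] [DecidableEq β]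
    (F : Finset (Finset α)) (G : Finset (Finset β)) : ℕ :=
  (G.powerset.filter (fun G' => ∃ φ : α → β, Function.Injective φ ∧
      G' = F.image (fun e => e.image φ))).card

/-!
Embed `V(F)` into any `|V(F)|`-subset `S` of `h`. If every `r`-subset of `S` lay in at least
`|E(F)|` hyperedges, Hall's condition would hold trivially and would give distinct hyperedges
containing the images of the edges of `F`, i.e. a Berge-`F`. So every `|V(F)|`-subset of `h`
contains a light `r`-set (one in fewer than `|E(F)|` hyperedges). Each `r`-set lies in
`C(|h| - r, |V(F)| - r)` of these subsets, and double counting yields at least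
`C(|h|, r) / C(|V(F)|, r)` light `r`-sets: one may take `a = 1 - 1 / C(|V(F)|, r)`.
-/

lemma Finset.exists_injOn_mem_of_card_le {ι α : Type*} [DecidableEq α] [Nonempty α]
    (s : Finset ι) (t : ι → Finset α) (ht : ∀ i ∈ s, #s ≤ #(t i)) :
    ∃ f : ι → α, Set.InjOn f s ∧ ∀ i ∈ s, f i ∈ t i := by
  classical
  obtain ⟨f, hf, hft⟩ :=
    (all_card_le_biUnion_card_iff_exists_injective fun i : s => t i).1 fun A => by
      rcases A.eq_empty_or_nonempty with rfl | ⟨i, hi⟩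
      · simp
      · calc #A ≤ #s := by simpa using card_le_univ A
          _ ≤ #(t i) := ht i i.2
          _ ≤ #(A.biUnion fun i : s => t i) :=
            card_le_card (subset_biUnion_of_mem (fun i : s => t i) hi)
  refine ⟨fun i => if hi : i ∈ s then f ⟨i, hi⟩ else Classical.arbitrary α, ?_, ?_⟩
  · intro i hi j hj hij
    rw [mem_coe] at hi hj
    simp only [hi, hj, dite_true] at hij
    exact congrArg Subtype.val (hf hij)
  · intro i hi
    simpa [hi] using hft ⟨i, hi⟩

lemma containsBerge_of_card_le {α β : Type*} [DecidableEq α] [DecidableEq β]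
    {F : Finset (Finset α)} {H : Finset (Finset β)} {φ : α → β} (hφ : Function.Injective φ)
    (hF : ∀ e ∈ F, #F ≤ #{g ∈ H | e.image φ ⊆ g}) : ContainsBerge F H := by
  obtain ⟨f, hf, hfH⟩ :=
    exists_injOn_mem_of_card_le F (fun e => {g ∈ H | e.image φ ⊆ g}) hF
  exact ⟨φ, f, hφ, hf, fun e he => (mem_filter.1 (hfH e he)).1,
    fun e he => (mem_filter.1 (hfH e he)).2⟩

lemma exists_light_subset_of_not_containsBerge {α β : Type*} [Fintype α] [DecidableEq α]
    [DecidableEq β] {r : ℕ} {F : Finset (Finset α)} (hF : ∀ e ∈ F, #e = r)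
    {H : Finset (Finset β)} (hH : ¬ ContainsBerge F H) {S : Finset β}
    (hS : Fintype.card α ≤ #S) : ∃ e ∈ S.powersetCard r, #{g ∈ H | e ⊆ g} < #F := by
  obtain ⟨ψ⟩ := Function.Embedding.nonempty_of_card_le (β := S) (by simpa using hS)
  have hφ : Function.Injective fun a => (ψ a : β) := Subtype.val_injective.comp ψ.injective
  by_contra! hheavy
  refine hH (containsBerge_of_card_le hφ fun e he => hheavy _ ?_)
  rw [mem_powersetCard, card_image_of_injective _ hφ, hF e he]
  exact ⟨image_subset_iff.2 fun a _ => (ψ a).2, rfl⟩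

lemma choose_le_card_mul_choose_of_forall_exists_subset {β : Type*} [DecidableEq β] {r v : ℕ}
    (hrv : r ≤ v) {h : Finset β} (hvh : v ≤ #h) {P : Finset (Finset β)}
    (hP : P ⊆ h.powersetCard r) (hcover : ∀ S ∈ h.powersetCard v, ∃ e ∈ P, e ⊆ S) :
    (#h).choose r ≤ #P * v.choose r := by
  have hcount : #(h.powersetCard v) * 1 ≤ #P * (#h - r).choose (v - r) := by
    refine card_mul_le_card_mul (fun S e => e ⊆ S) (fun S hS => ?_) (fun e he => ?_)
    · obtain ⟨e, he, heS⟩ := hcover S hS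
      exact card_pos.2 ⟨e, mem_filter.2 ⟨he, heS⟩⟩
    · obtain ⟨heh, her⟩ := mem_powersetCard.1 (hP he)
      rw [bipartiteBelow, ← her]
      exact (card_filter_powersetCard_subset e h v heh (her ▸ hrv)).le
  rw [card_powersetCard, mul_one] at hcount
  refine Nat.le_of_mul_le_mul_right ?_ (Nat.choose_pos (Nat.sub_le_sub_right hvh r))
  calc (#h).choose r * (#h - r).choose (v - r) = (#h).choose v * v.choose r :=
        (Nat.choose_mul hrv).symm
    _ ≤ #P * (#h - r).choose (v - r) * v.choose r := Nat.mul_le_mul_right _ hcount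
    _ = #P * v.choose r * (#h - r).choose (v - r) := by ring

theorem statement14_general (r v : ℕ) (hv : r < v) :
    ∃ a : ℝ, a < 1 ∧
      ∀ F : Finset (Finset (Fin v)), (∀ e ∈ F, e.card = r) →
      ∀ (n : ℕ) (H : Finset (Finset (Fin n))), ¬ ContainsBerge F H →
      ∀ h ∈ H, v ≤ h.card →
        (1 - a) * ((h.card.choose r : ℕ) : ℝ) ≤
          (((h.powersetCard r).filter
            (fun e => (H.filter (fun g => e ⊆ g)).card < F.card)).card : ℝ) := by
  have hC : (0 : ℝ) < v.choose r := by exact_mod_cast Nat.choose_pos hv.le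
  refine ⟨1 - 1 / v.choose r, by simpa using hC, ?_⟩
  intro F hF n H hB h _ hvh
  have hcover : ∀ S ∈ h.powersetCard v, ∃ e ∈ (h.powersetCard r).filter
      (fun e => #{g ∈ H | e ⊆ g} < #F), e ⊆ S := by
    intro S hS
    obtain ⟨hSh, hSv⟩ := mem_powersetCard.1 hS
    obtain ⟨e, he, hlight⟩ :=
      exists_light_subset_of_not_containsBerge hF hB (S := S) (by simp [hSv])
    obtain ⟨heS, her⟩ := mem_powersetCard.1 he
    exact ⟨e, mem_filter.2 ⟨mem_powersetCard.2 ⟨heS.trans hSh, her⟩, hlight⟩, heS⟩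
  have hbound :=
    choose_le_card_mul_choose_of_forall_exists_subset hv.le hvh (filter_subset _ _) hcover
  rw [sub_sub_cancel, one_div_mul_eq_div, div_le_iff₀ hC]
  exact_mod_cast hbound

theorem statement14 (r v : ℕ) (hr : 2 ≤ r) (hv : r < v) :
    ∃ a : ℝ, a < 1 ∧
      ∀ F : Finset (Finset (Fin v)), (∀ e ∈ F, e.card = r) →
      ∀ (n : ℕ) (H : Finset (Finset (Fin n))), ¬ ContainsBerge F H →
      ∀ h ∈ H, v ≤ h.card →
        (1 - a) * ((h.card.choose r : ℕ) : ℝ) ≤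
          (((h.powersetCard r).filter
            (fun e => (H.filter (fun g => e ⊆ g)).card < F.card)).card : ℝ) :=
  statement14_general r v hv
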